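/- Fix an integer n ≥ 1, ε ∈ ℝ, an open interval I ⊆ ℝ, a smooth function ψ : I → ℝ, and smooth maps B, R : I → (n×n real matrices) satisfying the Riccati equation B' + B² + R = 0 on I. Set B_ε := e^{(2(1−ε)/n)ψ}·B − (ψ*/n)·Iₙ and R_{(0,ε)} := e^{(4(1−ε)/n)ψ}·(R + (1/n)(ψ'' + ψ'²/n)·Iₙ). Then the weighted Riccati equation B_ε* + (2ε/n)·ψ*·B_ε + B_ε² + R_{(0,ε)} = 0 holds on I. -/

import Mathlib

attribute [local instance] Matrix.normedAddCommGroup Matrix.normedSpace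

/-- Derivative with respect to the `ε`-proper time `τ_ε` (a primitive of
`e^{(2(ε−1)/n)ψ}`): `f* = e^{(2(1−ε)/n)ψ} · f'`, matrix-valued version. -/
noncomputable def mstar (n : ℕ) (ε : ℝ) (ψ : ℝ → ℝ)
    (f : ℝ → Matrix (Fin n) (Fin n) ℝ) : ℝ → Matrix (Fin n) (Fin n) ℝ :=
  fun t => Real.exp (2 * (1 - ε) / (n : ℝ) * ψ t) • deriv f t

/-- Derivative with respect to the `ε`-proper time, scalar version. -/
noncomputable def sstar (n : ℕ) (ε : ℝ) (ψ : ℝ → ℝ) (f : ℝ → ℝ) : ℝ → ℝ :=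
  fun t => Real.exp (2 * (1 - ε) / (n : ℝ) * ψ t) * deriv f t

/-- weighted Riccati equation, Lemma 5.6. If `B' + B² + R = 0` on
the open interval `I`, `B_ε = e^{(2(1−ε)/n)ψ}·B − (ψ*/n)·Iₙ` and
`R_{(0,ε)} = e^{(4(1−ε)/n)ψ}·(R + (1/n)(ψ'' + ψ'²/n)·Iₙ)`, then
`B_ε* + (2ε/n)·ψ*·B_ε + B_ε² + R_{(0,ε)} = 0` on `I`. -/
theorem weighted_riccati_equation (n : ℕ) (hn : 1 ≤ n) (ε : ℝ)
    (I : Set ℝ) (hIopen : IsOpen I) (hIinterval : I.OrdConnected)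
    (ψ : ℝ → ℝ) (B R : ℝ → Matrix (Fin n) (Fin n) ℝ)
    (hψ : ContDiffOn ℝ (⊤ : ℕ∞) ψ I) (hB : ContDiffOn ℝ (⊤ : ℕ∞) B I) (hR : ContDiffOn ℝ (⊤ : ℕ∞) R I)
    (hRiccati : ∀ t ∈ I, deriv B t + B t * B t + R t = 0)
    (Bε : ℝ → Matrix (Fin n) (Fin n) ℝ)
    (hBε : ∀ t, Bε t = Real.exp (2 * (1 - ε) / (n : ℝ) * ψ t) • B t
      - (sstar n ε ψ ψ t / (n : ℝ)) • (1 : Matrix (Fin n) (Fin n) ℝ))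
    (R0ε : ℝ → Matrix (Fin n) (Fin n) ℝ)
    (hR0ε : ∀ t, R0ε t = Real.exp (4 * (1 - ε) / (n : ℝ) * ψ t) •
      (R t + ((1 / (n : ℝ)) * (deriv (deriv ψ) t + (deriv ψ t) ^ 2 / (n : ℝ))) •
        (1 : Matrix (Fin n) (Fin n) ℝ))) :
    ∀ t ∈ I,
      mstar n ε ψ Bε t + (2 * ε / (n : ℝ) * sstar n ε ψ ψ t) • Bε t
        + Bε t * Bε t + R0ε t = 0 := by
  intro t ht
  have hmem := hIopen.mem_nhds ht
  -- differentiability facts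
  have hψI : ContDiffOn ℝ 2 ψ I := hψ.of_le (by exact WithTop.coe_le_coe.mpr (le_top : (2 : ℕ∞) ≤ ⊤))
  have hψ' : ContDiffOn ℝ 1 (deriv ψ) I := hψI.deriv_of_isOpen hIopen le_rfl
  have hψ1 : HasDerivAt ψ (deriv ψ t) t :=
    (((hψI.contDiffAt hmem).differentiableAt (by norm_num)).hasDerivAt)
  have hψ2 : HasDerivAt (deriv ψ) (deriv (deriv ψ) t) t :=
    (((hψ'.contDiffAt hmem).differentiableAt (by norm_num)).hasDerivAt)
  have hB1 : HasDerivAt B (deriv B t) t :=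
    (((hB.contDiffAt hmem).differentiableAt (by simp)).hasDerivAt)
  set c : ℝ := 2 * (1 - ε) / (n : ℝ) with hc
  set a : ℝ := Real.exp (c * ψ t) with ha
  have hE : HasDerivAt (fun s => Real.exp (c * ψ s)) (Real.exp (c * ψ t) * (c * deriv ψ t)) t :=
    (hψ1.const_mul c).exp
  have hBεfun : Bε = fun s => Real.exp (c * ψ s) • B s
      - ((Real.exp (c * ψ s) * deriv ψ s) / (n : ℝ)) • (1 : Matrix (Fin n) (Fin n) ℝ) := by
    funext s; rw [hBε s]; rfl
  have hD : HasDerivAt Bε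
      ((a • deriv B t + (a * (c * deriv ψ t)) • B t)
        - (((a * (c * deriv ψ t)) * deriv ψ t + a * deriv (deriv ψ) t) / (n : ℝ))
          • (1 : Matrix (Fin n) (Fin n) ℝ)) t := by
    rw [hBεfun]
    exact (hE.smul hB1).sub
      (((hE.mul hψ2).div_const (n : ℝ)).smul_const (1 : Matrix (Fin n) (Fin n) ℝ))
  have hB' : deriv B t = -(B t * B t + R t) := by
    have h := hRiccati t ht
    rw [add_assoc] at h
    exact eq_neg_of_add_eq_zero_left h
  have hexp : Real.exp (4 * (1 - ε) / (n : ℝ) * ψ t) = a * a := by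
    rw [ha, ← Real.exp_add]
    congr 1
    rw [hc]
    ring
  simp only [mstar, sstar, hBε, hR0ε, hD.deriv, hB', hexp, ← hc, ← ha]
  erw [hD.deriv, hB']
  simp only [sub_mul, mul_sub, smul_mul_assoc, mul_smul_comm, smul_smul, mul_one, one_mul,
    smul_add, smul_sub, smul_neg, neg_add, mul_neg]
  rw [hc]
  module
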